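/- Let W be a Morse sequence. Then the maps ∂̂_p are boundary operators and the maps δ̂_p are coboundary operators: for every p, ∂̂_p ∘ ∂̂_{p+1} = 0 and δ̂_{p+1} ∘ δ̂_p = 0. -/

import Mathlib

/-! ## Basic notions: simplicial complexes, collapses, expansions, fillings -/

variable {V : Type*} [DecidableEq V]

/-- A (finite) simplicial complex: a finite collection of nonempty finite sets that is
closed under taking nonempty subsets. -/
def IsComplex (K : Finset (Finset V)) : Prop :=
  ∀ τ ∈ K, τ.Nonempty ∧ ∀ σ, σ ⊆ τ → σ.Nonempty → σ ∈ K

/-- `ν` is a facet (inclusion-maximal face) of `K`. -/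
def IsFacet (K : Finset (Finset V)) (ν : Finset V) : Prop :=
  ν ∈ K ∧ ∀ ρ ∈ K, ν ⊆ ρ → ρ = ν

/-- `(σ, τ)` is a free pair for `K`: `σ ⊊ τ` and `τ` is the only face of `K`
strictly containing `σ`. -/
def IsFreePair (K : Finset (Finset V)) (σ τ : Finset V) : Prop :=
  σ ∈ K ∧ τ ∈ K ∧ σ ⊂ τ ∧ ∀ ρ ∈ K, σ ⊂ ρ → ρ = τ

/-- `K` is an elementary expansion of `L` (equivalently, `L` is an elementary collapse
of `K`): `L = K \ {σ, τ}` for some free pair `(σ, τ)` of `K`. -/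
def ElemExpansion (L K : Finset (Finset V)) : Prop :=
  ∃ σ τ, IsFreePair K σ τ ∧ L = K \ {σ, τ}

/-- `K` is an elementary filling of `L` (equivalently, `L` is an elementary perforation
of `K`): `L = K \ {ν}` for some facet `ν` of `K`. -/
def ElemFilling (L K : Finset (Finset V)) : Prop :=
  ∃ ν, IsFacet K ν ∧ L = K \ {ν}

/-- `L` is an elementary collapse of `K`. -/
def ElemCollapse (K L : Finset (Finset V)) : Prop :=
  ∃ σ τ, IsFreePair K σ τ ∧ L = K \ {σ, τ}

/-- `K` collapses onto `L`: there is a sequence of elementary collapses from `K` to `L`. -/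
def CollapsesOnto (K L : Finset (Finset V)) : Prop :=
  Relation.ReflTransGen ElemCollapse K L

/-! ## Morse sequences -/

/-- A Morse sequence `⟨∅ = K₀, …, K_k = K⟩`: each `K_i` is a simplicial complex that is
an elementary expansion or an elementary filling of `K_{i-1}`. -/
structure MorseSeq (V : Type*) [DecidableEq V] where
  k : ℕ
  seq : ℕ → Finset (Finset V)
  cpx : ∀ i ≤ k, IsComplex (seq i)
  init : seq 0 = ∅
  step : ∀ i, 1 ≤ i → i ≤ k → ElemExpansion (seq (i - 1)) (seq i) ∨ ElemFilling (seq (i - 1)) (seq i)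

/-- The simplicial complex `K = K_k` on which the Morse sequence lives. -/
def MorseSeq.cplx (W : MorseSeq V) : Finset (Finset V) := W.seq W.k

/-- A face added by a filling step: a critical face of `W`. -/
def MorseSeq.Critical (W : MorseSeq V) (ν : Finset V) : Prop :=
  ∃ i, 1 ≤ i ∧ i ≤ W.k ∧ W.seq i \ W.seq (i - 1) = {ν}

/-- `(σ, τ)` is a regular pair for `W`: the two faces are added together by an
elementary expansion step. -/
def MorseSeq.Regular (W : MorseSeq V) (σ τ : Finset V) : Prop :=
  ∃ i, 1 ≤ i ∧ i ≤ W.k ∧ σ ⊂ τ ∧ W.seq i \ W.seq (i - 1) = {σ, τ}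

/-- `σ` is lower regular for `W`. -/
def MorseSeq.LowerRegular (W : MorseSeq V) (σ : Finset V) : Prop := ∃ τ, W.Regular σ τ

/-- `τ` is upper regular for `W`. -/
def MorseSeq.UpperRegular (W : MorseSeq V) (τ : Finset V) : Prop := ∃ σ, W.Regular σ τ

/-! ## Chains modulo 2 -/

/-- The boundary `∂(σ)` of a simplex: the chain of its (nonempty) codimension-one faces. -/
def bd (σ : Finset V) : Finset (Finset V) :=
  σ.powerset.filter fun ρ => ρ.Nonempty ∧ ρ.card + 1 = σ.card

/-- The coboundary `δ(σ)` of a simplex in `K`: the chain of faces of `K` of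
codimension one over `σ` containing `σ`. -/
def cobd (K : Finset (Finset V)) (σ : Finset V) : Finset (Finset V) :=
  K.filter fun τ => σ ⊆ τ ∧ σ.card + 1 = τ.card

/-- Mod-2 linear extension: `chainSum c f` is the sum (symmetric difference) of
the chains `f σ` over `σ ∈ c`; an element belongs to it iff it belongs to an odd
number of the `f σ`. -/
def chainSum (c : Finset (Finset V)) (f : Finset V → Finset (Finset V)) : Finset (Finset V) :=
  (c.biUnion f).filter fun ν => (c.filter fun σ => ν ∈ f σ).card % 2 = 1

/-- `c` is a `p`-chain of `K`: a set of `p`-simplices of `K`. -/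
def IsChainOf (K : Finset (Finset V)) (p : ℕ) (c : Finset (Finset V)) : Prop :=
  ∀ ν ∈ c, ν ∈ K ∧ ν.card = p + 1

/-- `c` is a chain of critical `p`-simplices of `W` (an element of `Ŵ[p]`). -/
def IsCritChain (W : MorseSeq V) (p : ℕ) (c : Finset (Finset V)) : Prop :=
  ∀ ν ∈ c, W.Critical ν ∧ ν.card = p + 1

/-! ## Frames, reference and coreference maps -/

/-- A frame on `W`: it assigns to each `p`-simplex of `K` a chain of critical
`p`-simplices of `W`. -/
def IsFrame (W : MorseSeq V) (Υ : Finset V → Finset (Finset V)) : Prop :=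
  ∀ ν ∈ W.cplx, ∀ μ ∈ Υ ν, W.Critical μ ∧ μ.card = ν.card

/-- `Λ` is the reference map of `W`: a frame with `Λ(ν) = ν` for critical `ν`, and
`Λ(τ) = 0`, `Λ(∂τ) = 0` for upper regular `τ`. -/
def IsRefMap (W : MorseSeq V) (Λ : Finset V → Finset (Finset V)) : Prop :=
  IsFrame W Λ ∧ (∀ ν, W.Critical ν → Λ ν = {ν}) ∧
    ∀ τ, W.UpperRegular τ → Λ τ = ∅ ∧ chainSum (bd τ) Λ = ∅

/-- `Λ` is the coreference map of `W`: a frame with `Λ(ν) = ν` for critical `ν`, and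
`Λ(σ) = 0`, `Λ(δσ) = 0` for lower regular `σ`. -/
def IsCorefMap (W : MorseSeq V) (Λ : Finset V → Finset (Finset V)) : Prop :=
  IsFrame W Λ ∧ (∀ ν, W.Critical ν → Λ ν = {ν}) ∧
    ∀ σ, W.LowerRegular σ → Λ σ = ∅ ∧ chainSum (cobd W.cplx σ) Λ = ∅

/-- The extension map `∧̃` of `W` (defined from the coreference map `Vee`):
`∧̃(κ) = {ν ∈ K | κ ∈ ∨(ν)}`. -/
def extMap (W : MorseSeq V) (Vee : Finset V → Finset (Finset V)) (κ : Finset V) :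
    Finset (Finset V) :=
  W.cplx.filter fun ν => κ ∈ Vee ν

/-- The coextension map `∨̃` of `W` (defined from the reference map `Λ`):
`∨̃(κ) = {ν ∈ K | κ ∈ ∧(ν)}`. -/
def coextMap (W : MorseSeq V) (Λ : Finset V → Finset (Finset V)) (κ : Finset V) :
    Finset (Finset V) :=
  W.cplx.filter fun ν => κ ∈ Λ ν

/-! Identify mod-2 chains with `Finset V →₀ ZMod 2`, where `∂̂ = ∧ ∘ ∂` and `δ̂ = ∨ ∘ δ` become
compositions of linear maps. The heart of the proof is the identity `∧∂∧ = ∧∂` on the simplices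
of `K` (dually `∨δ∨ = ∨δ`), since then `∂̂∂̂ = ∧∂∧∂ = ∧∂∂ = 0`. It is checked simplex by simplex
along `W`: it is immediate for critical and for upper regular simplices, and for a lower regular
`σ` paired with `τ`, the relations `∧(∂τ) = 0` and `∂∂τ = 0` reduce it to the other faces of `τ`,
which appear earlier in `W`. For `∨` one runs through `W` backwards: the cofaces of `σ` other
than `τ` appear later. -/

open Finset

theorem map_map_map_eq_of_mem_sum {R M ι : Type*} [Ring R] [AddCommGroup M] [Module R M]
    [DecidableEq ι] {L D : M →ₗ[R] M} {e : ι → M} {s : Finset ι} {i : ι} (hi : i ∈ s)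
    (hL : L (∑ j ∈ s, e j) = 0) (hD : D (∑ j ∈ s, e j) = 0)
    (h : ∀ j ∈ s.erase i, L (D (L (e j))) = L (D (e j))) :
    L (D (L (e i))) = L (D (e i)) := by
  have hrest : L (D (L (∑ j ∈ s.erase i, e j))) = L (D (∑ j ∈ s.erase i, e j)) := by
    simp only [map_sum]
    exact sum_congr rfl h
  rw [eq_sub_of_add_eq (add_sum_erase s e hi)]
  simp only [map_sub, map_neg, hL, hD, zero_sub, hrest]

abbrev Chains (α : Type*) := α →₀ ZMod 2

section Chains

variable {α : Type*}

noncomputable def chainVec (c : Finset α) : Chains α :=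
  ∑ a ∈ c, Finsupp.single a 1

noncomputable def chainLin (f : α → Finset α) : Chains α →ₗ[ZMod 2] Chains α :=
  Finsupp.linearCombination (ZMod 2) (chainVec ∘ f)

theorem chainVec_apply [DecidableEq α] (c : Finset α) (a : α) :
    chainVec c a = if a ∈ c then 1 else 0 := by
  simp [chainVec, Finsupp.finsetSum_apply, Finsupp.single_apply]

theorem chainVec_empty : chainVec (∅ : Finset α) = 0 := sum_empty

theorem chainVec_singleton (a : α) : chainVec {a} = Finsupp.single a 1 := sum_singleton _ _

theorem eq_empty_of_chainVec_eq_zero {c : Finset α} (h : chainVec c = 0) : c = ∅ := by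
  classical
  refine eq_empty_of_forall_notMem fun a ha => ?_
  simpa [chainVec_apply, ha] using DFunLike.congr_fun h a

theorem chainLin_single (f : α → Finset α) (a : α) :
    chainLin f (Finsupp.single a 1) = chainVec (f a) := by
  simp [chainLin]

theorem chainLin_chainVec_apply [DecidableEq α] (f : α → Finset α) (c : Finset α) (a : α) :
    chainLin f (chainVec c) a = (#{b ∈ c | a ∈ f b} : ZMod 2) := by
  rw [chainVec, map_sum, Finsupp.finsetSum_apply]
  simp only [chainLin_single, chainVec_apply, sum_boole]

theorem chainLin_chainVec_eq_zero_of_even [DecidableEq α] {f : α → Finset α} {c : Finset α}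
    (h : ∀ a, Even #{b ∈ c | a ∈ f b}) : chainLin f (chainVec c) = 0 := by
  ext a
  rw [chainLin_chainVec_apply, ZMod.natCast_eq_zero_iff_even.2 (h a)]
  rfl

theorem map_map_map_chainVec {L D : Chains α →ₗ[ZMod 2] Chains α} {c : Finset α}
    (h : ∀ a ∈ c, L (D (L (Finsupp.single a 1))) = L (D (Finsupp.single a 1))) :
    L (D (L (chainVec c))) = L (D (chainVec c)) := by
  simp only [chainVec, map_sum]
  exact sum_congr rfl h

end Chains

theorem mem_chainSum {c : Finset (Finset V)} {f : Finset V → Finset (Finset V)} {μ : Finset V} :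
    μ ∈ chainSum c f ↔ Odd #{σ ∈ c | μ ∈ f σ} := by
  rw [chainSum, mem_filter, Nat.odd_iff, and_iff_right_iff_imp]
  intro h
  obtain ⟨σ, hσ⟩ := card_pos.1 (by omega : 0 < #{σ ∈ c | μ ∈ f σ})
  rw [mem_filter] at hσ
  exact mem_biUnion.2 ⟨σ, hσ⟩

theorem chainVec_chainSum (c : Finset (Finset V)) (f : Finset V → Finset (Finset V)) :
    chainVec (chainSum c f) = chainLin f (chainVec c) := by
  ext μ
  rw [chainLin_chainVec_apply, chainVec_apply]
  rcases Nat.even_or_odd #{σ ∈ c | μ ∈ f σ} with h | h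
  · rw [if_neg (mt mem_chainSum.1 (Nat.not_odd_iff_even.2 h)),
      ZMod.natCast_eq_zero_iff_even.2 h]
  · rw [if_pos (mem_chainSum.2 h), ZMod.natCast_eq_one_iff_odd.2 h]

theorem chainVec_chainSum_comp (c : Finset (Finset V)) (g h : Finset V → Finset (Finset V)) :
    chainVec (chainSum c fun ν => chainSum (g ν) h) = chainLin h (chainLin g (chainVec c)) := by
  suffices chainLin (fun ν => chainSum (g ν) h) = chainLin h ∘ₗ chainLin g by
    rw [chainVec_chainSum, this, LinearMap.comp_apply]
  refine Finsupp.lhom_ext' fun ρ => LinearMap.ext_ring ?_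
  simp [chainLin_single, chainVec_chainSum]

omit [DecidableEq V] in
theorem mem_bd {ρ σ : Finset V} : ρ ∈ bd σ ↔ ρ ⊆ σ ∧ ρ.Nonempty ∧ #ρ + 1 = #σ := by
  simp [bd]

theorem mem_cobd {K : Finset (Finset V)} {σ τ : Finset V} :
    τ ∈ cobd K σ ↔ τ ∈ K ∧ σ ⊆ τ ∧ #σ + 1 = #τ := by
  simp [cobd]

theorem chainSum_bd_subset {K c : Finset (Finset V)} (hK : IsComplex K) (hc : c ⊆ K) :
    chainSum c bd ⊆ K := fun ρ hρ => by
  obtain ⟨ν, hν, hρν⟩ := mem_biUnion.1 (mem_filter.1 hρ).1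
  obtain ⟨hsub, hne, -⟩ := mem_bd.1 hρν
  exact (hK ν (hc hν)).2 ρ hsub hne

theorem chainSum_cobd_subset (K c : Finset (Finset V)) : chainSum c (cobd K) ⊆ K := fun ρ hρ => by
  obtain ⟨ν, -, hρν⟩ := mem_biUnion.1 (mem_filter.1 hρ).1
  exact (mem_cobd.1 hρν).1

theorem mem_bd_and_mem_bd {ρ σ τ : Finset V} :
    σ ∈ bd τ ∧ ρ ∈ bd σ ↔ (ρ.Nonempty ∧ #ρ + 2 = #τ) ∧ σ ∈ Ioo ρ τ := by
  simp only [mem_bd, mem_Ioo]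
  constructor
  · rintro ⟨⟨hστ, -, hστc⟩, hρσ, hρ, hρσc⟩
    exact ⟨⟨hρ, by omega⟩, Finset.ssubset_iff_subset_ne.2 ⟨hρσ, by rintro rfl; omega⟩,
      Finset.ssubset_iff_subset_ne.2 ⟨hστ, by rintro rfl; omega⟩⟩
  · rintro ⟨⟨hρ, hρτ⟩, hρσ, hστ⟩
    have := card_lt_card hρσ
    have := card_lt_card hστ
    exact ⟨⟨hστ.subset, hρ.mono hρσ.subset, by omega⟩, hρσ.subset, hρ, by omega⟩

theorem mem_cobd_and_mem_cobd {K : Finset (Finset V)} (hK : IsComplex K) {ν σ ρ : Finset V} :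
    σ ∈ cobd K ν ∧ ρ ∈ cobd K σ ↔ (ρ ∈ K ∧ #ν + 2 = #ρ) ∧ σ ∈ Ioo ν ρ := by
  simp only [mem_cobd, mem_Ioo]
  constructor
  · rintro ⟨⟨-, hνσ, hνσc⟩, hρ, hσρ, hσρc⟩
    exact ⟨⟨hρ, by omega⟩, Finset.ssubset_iff_subset_ne.2 ⟨hνσ, by rintro rfl; omega⟩,
      Finset.ssubset_iff_subset_ne.2 ⟨hσρ, by rintro rfl; omega⟩⟩
  · rintro ⟨⟨hρ, hνρ⟩, hνσ, hσρ⟩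
    have := card_lt_card hνσ
    have := card_lt_card hσρ
    obtain ⟨x, hx, -⟩ := exists_of_ssubset hνσ
    exact ⟨⟨(hK ρ hρ).2 σ hσρ.subset ⟨x, hx⟩, hνσ.subset, by omega⟩, hρ, hσρ.subset, by omega⟩

theorem even_card_Ioo_of_card_add_two {s t : Finset V} (h : #s + 2 = #t) : Even #(Ioo s t) := by
  by_cases hst : s ⊆ t
  · rw [card_Ioo_finset hst, ← h, Nat.add_sub_cancel_left]
    decide
  · rw [Ioo_eq_empty fun hlt => hst hlt.le, card_empty]
    exact Even.zero

theorem even_card_filter_of_iff {c : Finset (Finset V)} {q : Finset V → Prop} [DecidablePred q]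
    {p : Prop} {s t : Finset V} (hst : p → #s + 2 = #t) (h : ∀ σ, σ ∈ c ∧ q σ ↔ p ∧ σ ∈ Ioo s t) :
    Even #{σ ∈ c | q σ} := by
  classical
  have hfilter : {σ ∈ c | q σ} = {σ ∈ Ioo s t | p} := by
    ext σ
    rw [mem_filter, mem_filter, h, and_comm]
  rw [hfilter, filter_const]
  split_ifs with hp
  · exact even_card_Ioo_of_card_add_two (hst hp)
  · exact Even.zero

theorem chainLin_bd_chainVec_bd (τ : Finset V) : chainLin bd (chainVec (bd τ)) = 0 :=
  chainLin_chainVec_eq_zero_of_even fun _ =>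
    even_card_filter_of_iff (fun h => h.2) fun _ => mem_bd_and_mem_bd

theorem chainLin_cobd_chainVec_cobd {K : Finset (Finset V)} (hK : IsComplex K) (σ : Finset V) :
    chainLin (cobd K) (chainVec (cobd K σ)) = 0 :=
  chainLin_chainVec_eq_zero_of_even fun _ =>
    even_card_filter_of_iff (fun h => h.2) fun _ => mem_cobd_and_mem_cobd hK

theorem chainLin_bd_chainLin_bd (x : Chains (Finset V)) : chainLin bd (chainLin bd x) = 0 := by
  suffices chainLin bd ∘ₗ chainLin bd = (0 : Chains (Finset V) →ₗ[ZMod 2] _) from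
    LinearMap.congr_fun this x
  refine Finsupp.lhom_ext' fun ρ => LinearMap.ext_ring ?_
  simp [chainLin_single, chainLin_bd_chainVec_bd]

theorem chainLin_cobd_chainLin_cobd {K : Finset (Finset V)} (hK : IsComplex K)
    (x : Chains (Finset V)) : chainLin (cobd K) (chainLin (cobd K) x) = 0 := by
  suffices chainLin (cobd K) ∘ₗ chainLin (cobd K) = (0 : Chains (Finset V) →ₗ[ZMod 2] _) from
    LinearMap.congr_fun this x
  refine Finsupp.lhom_ext' fun ρ => LinearMap.ext_ring ?_
  simp [chainLin_single, chainLin_cobd_chainVec_cobd hK]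

theorem IsFreePair.card_add_one {K : Finset (Finset V)} (hK : IsComplex K) {σ τ : Finset V}
    (h : IsFreePair K σ τ) : #σ + 1 = #τ := by
  obtain ⟨-, hτ, hστ, hmax⟩ := h
  obtain ⟨x, hxτ, hxσ⟩ := exists_of_ssubset hστ
  have hmem : insert x σ ∈ K := (hK τ hτ).2 _ (insert_subset hxτ hστ.subset) (insert_nonempty _ _)
  rw [← hmax _ hmem (ssubset_insert hxσ), card_insert_of_notMem hxσ]

theorem IsFreePair.eq_of_mem_cobd {K L : Finset (Finset V)} {σ τ τ' : Finset V}
    (h : IsFreePair L σ τ) (hτ' : τ' ∈ cobd K σ) (hτ'L : τ' ∈ L) : τ' = τ := by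
  obtain ⟨-, hστ', hcard⟩ := mem_cobd.1 hτ'
  exact h.2.2.2 τ' hτ'L (Finset.ssubset_iff_subset_ne.2 ⟨hστ', by rintro rfl; omega⟩)

namespace MorseSeq

variable {W : MorseSeq V}

theorem seq_subset_cplx {i : ℕ} (hi : i ≤ W.k) : W.seq i ⊆ W.cplx := by
  induction hi using Nat.decreasingInduction with
  | self => exact Subset.rfl
  | of_succ i hi ih =>
    refine Subset.trans ?_ ih
    rcases W.step (i + 1) (by omega) hi with ⟨σ, τ, -, h⟩ | ⟨ν, -, h⟩ <;>
      (rw [Nat.add_sub_cancel] at h; rw [h]; exact sdiff_subset)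

theorem Critical.mem_cplx {ν : Finset V} (h : W.Critical ν) : ν ∈ W.cplx := by
  obtain ⟨i, -, hi, hν⟩ := h
  exact seq_subset_cplx hi (mem_sdiff.1 (hν ▸ mem_singleton_self ν)).1

theorem new_face_cases {i : ℕ} (hi : i < W.k) {ρ : Finset V} (hρ : ρ ∈ W.seq (i + 1))
    (hρ' : ρ ∉ W.seq i) :
    W.Critical ρ ∨
    (∃ τ, W.Regular ρ τ ∧ IsFreePair (W.seq (i + 1)) ρ τ ∧ W.seq (i + 1) \ W.seq i = {ρ, τ}) ∨
    (∃ σ, W.Regular σ ρ ∧ IsFreePair (W.seq (i + 1)) σ ρ ∧ W.seq (i + 1) \ W.seq i = {σ, ρ}) := by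
  have hnew : ρ ∈ W.seq (i + 1) \ W.seq i := mem_sdiff.2 ⟨hρ, hρ'⟩
  rcases W.step (i + 1) (by omega) hi with ⟨σ, τ, hfree, h⟩ | ⟨ν, hfacet, h⟩
  · have hdiff : W.seq (i + 1) \ W.seq i = {σ, τ} := by
      rw [Nat.add_sub_cancel] at h
      rw [h, Finset.sdiff_sdiff_eq_self (insert_subset hfree.1 (singleton_subset_iff.2 hfree.2.1))]
    have hreg : W.Regular σ τ := ⟨i + 1, by omega, hi, hfree.2.2.1, hdiff⟩
    rw [hdiff, mem_insert, mem_singleton] at hnew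
    rcases hnew with rfl | rfl
    · exact Or.inr (Or.inl ⟨τ, hreg, hfree, hdiff⟩)
    · exact Or.inr (Or.inr ⟨σ, hreg, hfree, hdiff⟩)
  · have hdiff : W.seq (i + 1) \ W.seq i = {ν} := by
      rw [Nat.add_sub_cancel] at h
      rw [h, Finset.sdiff_sdiff_eq_self (singleton_subset_iff.2 hfacet.1)]
    rw [hdiff, mem_singleton] at hnew
    exact Or.inl ⟨i + 1, by omega, hi, hnew ▸ hdiff⟩

theorem mem_seq_of_mem_bd {i : ℕ} (hi : i < W.k) {σ τ ρ : Finset V}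
    (hdiff : W.seq (i + 1) \ W.seq i = {σ, τ}) (hρ : ρ ∈ bd τ) (hρσ : ρ ≠ σ) : ρ ∈ W.seq i := by
  have hτ : τ ∈ W.seq (i + 1) := (mem_sdiff.1 (hdiff ▸ mem_insert_of_mem (mem_singleton_self τ))).1
  obtain ⟨hρτ, hρne, hcard⟩ := mem_bd.1 hρ
  by_contra hρ'
  have : ρ ∈ W.seq (i + 1) \ W.seq i := mem_sdiff.2 ⟨(W.cpx _ hi τ hτ).2 ρ hρτ hρne, hρ'⟩
  rw [hdiff, mem_insert, mem_singleton] at this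
  rcases this with rfl | rfl
  · exact hρσ rfl
  · omega

end MorseSeq

theorem IsRefMap.map_bd_map_eq {W : MorseSeq V} {Λ : Finset V → Finset (Finset V)}
    (hΛ : IsRefMap W Λ) {ρ : Finset V} (hρ : ρ ∈ W.cplx) :
    chainLin Λ (chainLin bd (chainLin Λ (Finsupp.single ρ 1))) =
      chainLin Λ (chainLin bd (Finsupp.single ρ 1)) := by
  obtain ⟨-, hcrit, hupper⟩ := hΛ
  obtain ⟨i, hi, hρi⟩ : ∃ i ≤ W.k, ρ ∈ W.seq i := ⟨W.k, le_rfl, hρ⟩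
  clear hρ
  induction i generalizing ρ with
  | zero => simp [W.init] at hρi
  | succ i ih =>
    by_cases hold : ρ ∈ W.seq i
    · exact ih (by omega) hold
    obtain hρc | ⟨τ, hreg, hfree, hdiff⟩ | ⟨σ, hreg, -, -⟩ := W.new_face_cases hi hρi hold
    · rw [chainLin_single Λ, hcrit ρ hρc, chainVec_singleton]
    · have hK := W.cpx (i + 1) hi
      have hbd : chainLin Λ (chainVec (bd τ)) = 0 := by
        rw [← chainVec_chainSum, (hupper τ ⟨ρ, hreg⟩).2, chainVec_empty]
      exact map_map_map_eq_of_mem_sum (e := (Finsupp.single · 1))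
        (mem_bd.2 ⟨hfree.2.2.1.subset, (hK ρ hfree.1).1, hfree.card_add_one hK⟩) hbd
        (chainLin_bd_chainVec_bd τ) fun ρ' hρ' =>
          ih (by omega) (W.mem_seq_of_mem_bd hi hdiff (mem_of_mem_erase hρ') (ne_of_mem_erase hρ'))
    · obtain ⟨hρ0, hbdρ⟩ := hupper ρ ⟨σ, hreg⟩
      rw [chainLin_single Λ, hρ0, chainVec_empty, map_zero, map_zero, chainLin_single bd,
        ← chainVec_chainSum, hbdρ, chainVec_empty]

theorem IsCorefMap.map_cobd_map_eq {W : MorseSeq V} {Vee : Finset V → Finset (Finset V)}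
    (hV : IsCorefMap W Vee) {ρ : Finset V} (hρ : ρ ∈ W.cplx) :
    chainLin Vee (chainLin (cobd W.cplx) (chainLin Vee (Finsupp.single ρ 1))) =
      chainLin Vee (chainLin (cobd W.cplx) (Finsupp.single ρ 1)) := by
  obtain ⟨-, hcrit, hlower⟩ := hV
  obtain ⟨i, hi, hρi⟩ : ∃ i ≤ W.k, ρ ∉ W.seq i := ⟨0, Nat.zero_le _, by simp [W.init]⟩
  induction hi using Nat.decreasingInduction generalizing ρ with
  | self => exact absurd hρ hρi
  | of_succ i hi ih =>
    by_cases hnew : ρ ∉ W.seq (i + 1)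
    · exact ih hρ hnew
    obtain hρc | ⟨τ, hreg, -, -⟩ | ⟨σ, hreg, hfree, -⟩ :=
      W.new_face_cases hi (not_not.1 hnew) hρi
    · rw [chainLin_single Vee, hcrit ρ hρc, chainVec_singleton]
    · obtain ⟨hρ0, hcobdρ⟩ := hlower ρ ⟨τ, hreg⟩
      rw [chainLin_single Vee, hρ0, chainVec_empty, map_zero, map_zero, chainLin_single (cobd _),
        ← chainVec_chainSum, hcobdρ, chainVec_empty]
    · have hK := W.cpx (i + 1) hi
      have hcobd : chainLin Vee (chainVec (cobd W.cplx σ)) = 0 := by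
        rw [← chainVec_chainSum, (hlower σ ⟨ρ, hreg⟩).2, chainVec_empty]
      exact map_map_map_eq_of_mem_sum (e := (Finsupp.single · 1))
        (mem_cobd.2 ⟨hρ, hfree.2.2.1.subset, hfree.card_add_one hK⟩) hcobd
        (chainLin_cobd_chainVec_cobd (W.cpx W.k le_rfl) σ) fun τ' hτ' =>
          ih (mem_cobd.1 (mem_of_mem_erase hτ')).1 fun hτ'i =>
            ne_of_mem_erase hτ' (hfree.eq_of_mem_cobd (mem_of_mem_erase hτ') hτ'i)

/-- The maps `∂̂` are boundary operators and the maps `δ̂` are coboundary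
operators: `∂̂ ∘ ∂̂ = 0` and `δ̂ ∘ δ̂ = 0` on chains of critical simplices. -/
theorem critical_boundary_is_boundary_operator (W : MorseSeq V)
    (Λ Vee : Finset V → Finset (Finset V))
    (hΛ : IsRefMap W Λ) (hV : IsCorefMap W Vee)
    (p : ℕ) (c : Finset (Finset V)) (hc : IsCritChain W p c) :
    chainSum (chainSum c (fun ν => chainSum (bd ν) Λ)) (fun ν => chainSum (bd ν) Λ) = ∅ ∧
    chainSum (chainSum c (fun ν => chainSum (cobd W.cplx ν) Vee))
      (fun ν => chainSum (cobd W.cplx ν) Vee) = ∅ := by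
  have hK : IsComplex W.cplx := W.cpx W.k le_rfl
  have hcK : c ⊆ W.cplx := fun ν hν => (hc ν hν).1.mem_cplx
  constructor <;> apply eq_empty_of_chainVec_eq_zero <;>
    rw [chainVec_chainSum_comp, chainVec_chainSum_comp, ← chainVec_chainSum]
  · rw [map_map_map_chainVec fun ρ hρ => hΛ.map_bd_map_eq (chainSum_bd_subset hK hcK hρ),
      chainVec_chainSum, chainLin_bd_chainLin_bd, map_zero]
  · rw [map_map_map_chainVec fun ρ hρ => hV.map_cobd_map_eq (chainSum_cobd_subset _ c hρ),
      chainVec_chainSum, chainLin_cobd_chainLin_cobd hK, map_zero]
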